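/- There is no 2-2-2-2-2 configuration under the Modified CFLS coloring φ in which all five color classes are paths of length 2 (i.e., in which, for each of the five colors, the two edges of that color share a vertex). -/

import Mathlib

namespace CFLS

/-- A vertex of `K_n` for `n = 2^(m^2)`: `m` blocks, each a string of `m` bits.
`x k` is the `k`-th block `x^(k+1)`, and `x k j` is its `j`-th bit (most significant first). -/
abbrev Vtx (m : ℕ) := Fin m → Fin m → Bool

/-- The `j`-th bit of a bit string (as a total function of `j : ℕ`). -/
def bitAt {N : ℕ} (f : Fin N → Bool) (j : ℕ) : Bool :=
  if h : j < N then f ⟨j, h⟩ else false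

/-- The value of a bit string read as a binary integer, most significant bit first. -/
def strToNat {N : ℕ} (f : Fin N → Bool) : ℕ :=
  ∑ j : Fin N, if f j then 2 ^ (N - 1 - j.val) else 0

/-- The `k`-th block of a vertex (as a total function of `k : ℕ`). -/
def blockAt {m : ℕ} (x : Vtx m) (k : ℕ) : Fin m → Bool :=
  if h : k < m then x ⟨k, h⟩ else fun _ => false

/-- The least block index at which `x` and `y` differ. -/
noncomputable def firstDiffBlock {m : ℕ} (x y : Vtx m) : ℕ :=
  sInf {k | blockAt x k ≠ blockAt y k}

/-- The position (1-indexed) of the first bit at which two bit strings differ; `0` if equal. -/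
noncomputable def firstDiffIdx {N : ℕ} (f g : Fin N → Bool) : ℕ :=
  if f = g then 0 else sInf {j | bitAt f j ≠ bitAt g j} + 1

/-- The value of a vertex read as a binary integer (concatenation of its blocks). -/
def vtxToNat {m : ℕ} (x : Vtx m) : ℕ :=
  ∑ k : Fin m, strToNat (x k) * (2 ^ m) ^ (m - 1 - k.val)

/-- The colors of the Modified CFLS coloring:
`((i, {x^(i), y^(i)}), i_1, …, i_m, δ_1, …, δ_m)`. -/
abbrev Color (m : ℕ) := (ℕ × Set (Fin m → Bool)) × (Fin m → ℕ) × (Fin m → ℤ)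

/-- The Modified CFLS color of the edge `xy` assuming `x ≤ y` as binary integers. -/
noncomputable def phiAux {m : ℕ} (x y : Vtx m) : Color m :=
  ((firstDiffBlock x y,
      {blockAt x (firstDiffBlock x y), blockAt y (firstDiffBlock x y)}),
   fun k => firstDiffIdx (x k) (y k),
   fun k => if strToNat (x k) ≤ strToNat (y k) then (1 : ℤ) else -1)

/-- The Modified CFLS coloring `φ`. -/
noncomputable def phi {m : ℕ} (x y : Vtx m) : Color m :=
  if vtxToNat x ≤ vtxToNat y then phiAux x y else phiAux y x

/-- The ten edges among five vertices. -/
def edgeList {m : ℕ} (a b c d e : Vtx m) : List (Vtx m × Vtx m) :=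
  [(a,b),(a,c),(a,d),(a,e),(b,c),(b,d),(b,e),(c,d),(c,e),(d,e)]

/-- The number of the ten edges among `a,b,c,d,e` receiving color `col` under `φ`. -/
noncomputable def colorCount {m : ℕ} (a b c d e : Vtx m) (col : Color m) : ℕ :=
  ((edgeList a b c d e).map fun p => phi p.1 p.2).countP fun x =>
    @decide (x = col) (Classical.propDecidable _)

/-- Five pairwise distinct vertices. -/
def Distinct5 {m : ℕ} (a b c d e : Vtx m) : Prop :=
  a ≠ b ∧ a ≠ c ∧ a ≠ d ∧ a ≠ e ∧ b ≠ c ∧ b ≠ d ∧ b ≠ e ∧ c ≠ d ∧ c ≠ e ∧ d ≠ e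

/-- `col` appears on some edge among `a,b,c,d,e`. -/
noncomputable def IsAttained {m : ℕ} (a b c d e : Vtx m) (col : Color m) : Prop :=
  colorCount a b c d e col ≠ 0

/-- A 2-2-2-2-2 configuration: five distinct vertices such that `φ` on the ten edges
among them takes exactly five values, each attained on exactly two edges. -/
def IsConfig22222 {m : ℕ} (a b c d e : Vtx m) : Prop :=
  Distinct5 a b c d e ∧
  ∀ col : Color m, colorCount a b c d e col = 0 ∨ colorCount a b c d e col = 2

/-- The color class of `col` is a matching: two vertex-disjoint edges of color `col`. -/
def IsMatchingClass {m : ℕ} (a b c d e : Vtx m) (col : Color m) : Prop :=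
  ∃ p ∈ edgeList a b c d e, ∃ q ∈ edgeList a b c d e,
    phi p.1 p.2 = col ∧ phi q.1 q.2 = col ∧
    p.1 ≠ q.1 ∧ p.1 ≠ q.2 ∧ p.2 ≠ q.1 ∧ p.2 ≠ q.2

/-- The color class of `col` is a path: two distinct edges of color `col` sharing a vertex. -/
def IsPathClass {m : ℕ} (a b c d e : Vtx m) (col : Color m) : Prop :=
  ∃ p ∈ edgeList a b c d e, ∃ q ∈ edgeList a b c d e,
    p ≠ q ∧ phi p.1 p.2 = col ∧ phi q.1 q.2 = col ∧
    (p.1 = q.1 ∨ p.1 = q.2 ∨ p.2 = q.1 ∨ p.2 = q.2)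

/-!
Take an edge among the five vertices whose first differing block index `i` is as large as
possible. Its colour class is a path `zu, zw`, so `{z^(i), u^(i)} = {z^(i), w^(i)}` with
`z^(i) ≠ u^(i)`, whence `u^(i) = w^(i)`. Since `u` and `w` also agree with `z` on every block
before `i`, the edge `uw` first differs after block `i`, contradicting the maximality of `i`.
-/

lemma _root_.Sym2.exists_eq_mk_mk_of_mem_of_mem {α : Type*} {e₁ e₂ : Sym2 α} (hd : ¬e₁.IsDiag)
    (hne : e₁ ≠ e₂) {v : α} (h₁ : v ∈ e₁) (h₂ : v ∈ e₂) :
    ∃ z u w, z ≠ u ∧ u ≠ w ∧ e₁ = s(z, u) ∧ e₂ = s(z, w) := by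
  refine ⟨v, Sym2.Mem.other h₁, Sym2.Mem.other h₂, (Sym2.other_ne hd h₁).symm, ?_,
    (Sym2.other_spec h₁).symm, (Sym2.other_spec h₂).symm⟩
  intro h
  exact hne (by rw [← Sym2.other_spec h₁, ← Sym2.other_spec h₂, h])

section

variable {m : ℕ}

lemma blockAt_val (x : Vtx m) (k : Fin m) : blockAt x k = x k := by
  simp [blockAt]

lemma firstDiffBlock_comm (x y : Vtx m) : firstDiffBlock x y = firstDiffBlock y x := by
  simp only [firstDiffBlock, ne_comm]

lemma firstDiffBlock_eq_of_mk_eq {x y x' y' : Vtx m} (h : s(x, y) = s(x', y')) :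
    firstDiffBlock x y = firstDiffBlock x' y' := by
  rcases Sym2.eq_iff.mp h with ⟨rfl, rfl⟩ | ⟨rfl, rfl⟩
  exacts [rfl, firstDiffBlock_comm _ _]

lemma blockAt_eq_of_lt_firstDiffBlock {x y : Vtx m} {k : ℕ} (h : k < firstDiffBlock x y) :
    blockAt x k = blockAt y k :=
  not_not.mp (Nat.notMem_of_lt_sInf h)

lemma blockAt_firstDiffBlock_ne {x y : Vtx m} (h : x ≠ y) :
    blockAt x (firstDiffBlock x y) ≠ blockAt y (firstDiffBlock x y) := by
  obtain ⟨k, hk⟩ := Function.ne_iff.mp h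
  have hk' : blockAt x k ≠ blockAt y k := by rwa [blockAt_val, blockAt_val]
  exact Nat.sInf_mem (s := {j | blockAt x j ≠ blockAt y j}) ⟨k, hk'⟩

noncomputable def blockPart (x y : Vtx m) : ℕ × Set (Fin m → Bool) :=
  (firstDiffBlock x y, {blockAt x (firstDiffBlock x y), blockAt y (firstDiffBlock x y)})

lemma blockPart_comm (x y : Vtx m) : blockPart x y = blockPart y x := by
  rw [blockPart, blockPart, firstDiffBlock_comm, Set.pair_comm]

lemma blockPart_eq_of_mk_eq {x y x' y' : Vtx m} (h : s(x, y) = s(x', y')) :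
    blockPart x y = blockPart x' y' := by
  rcases Sym2.eq_iff.mp h with ⟨rfl, rfl⟩ | ⟨rfl, rfl⟩
  exacts [rfl, blockPart_comm _ _]

lemma phi_fst (x y : Vtx m) : (phi x y).1 = blockPart x y := by
  unfold phi
  split
  · rfl
  · exact blockPart_comm y x

lemma firstDiffBlock_lt_of_blockPart_eq {z u w : Vtx m} (hzu : z ≠ u) (huw : u ≠ w)
    (h : blockPart z u = blockPart z w) : firstDiffBlock z u < firstDiffBlock u w := by
  set i := firstDiffBlock z u
  have hi : firstDiffBlock z w = i := (congrArg Prod.fst h).symm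
  have hpair :
      ({blockAt z i, blockAt u i} : Set (Fin m → Bool)) = {blockAt z i, blockAt w i} := by
    simpa only [blockPart, hi] using congrArg Prod.snd h
  have hui : blockAt u i = blockAt w i := by
    have hmem : blockAt u i ∈ ({blockAt z i, blockAt w i} : Set (Fin m → Bool)) :=
      hpair ▸ Set.mem_insert_of_mem _ rfl
    exact hmem.resolve_left (blockAt_firstDiffBlock_ne hzu).symm
  have hagree : ∀ k ≤ i, blockAt u k = blockAt w k := by
    intro k hk
    rcases hk.lt_or_eq with hk | rfl
    · rw [← blockAt_eq_of_lt_firstDiffBlock hk, blockAt_eq_of_lt_firstDiffBlock (hi ▸ hk)]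
    · exact hui
  by_contra! hle
  exact blockAt_firstDiffBlock_ne huw (hagree _ hle)

variable {a b c d e : Vtx m}

lemma mem_of_mem_edgeList {p : Vtx m × Vtx m} (hp : p ∈ edgeList a b c d e) {v : Vtx m}
    (hv : v ∈ s(p.1, p.2)) : v ∈ [a, b, c, d, e] := by
  simp only [edgeList, List.mem_cons, List.not_mem_nil, or_false] at hp
  rcases hp with rfl | rfl | rfl | rfl | rfl | rfl | rfl | rfl | rfl | rfl <;>
    rcases Sym2.mem_iff.mp hv with rfl | rfl <;> simp

lemma exists_mem_edgeList_mk_eq {u w : Vtx m} (hu : u ∈ [a, b, c, d, e])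
    (hw : w ∈ [a, b, c, d, e]) (huw : u ≠ w) :
    ∃ r ∈ edgeList a b c d e, s(r.1, r.2) = s(u, w) := by
  simp only [List.mem_cons, List.not_mem_nil, or_false] at hu hw
  rcases hu with rfl | rfl | rfl | rfl | rfl <;> rcases hw with rfl | rfl | rfl | rfl | rfl <;>
    simp_all [edgeList]

lemma fst_ne_snd_of_mem_edgeList (hd : Distinct5 a b c d e) {p : Vtx m × Vtx m}
    (hp : p ∈ edgeList a b c d e) : p.1 ≠ p.2 := by
  obtain ⟨h1, h2, h3, h4, h5, h6, h7, h8, h9, h10⟩ := hd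
  simp only [edgeList, List.mem_cons, List.not_mem_nil, or_false] at hp
  rcases hp with rfl | rfl | rfl | rfl | rfl | rfl | rfl | rfl | rfl | rfl <;> assumption

lemma nodup_map_mk_edgeList (hd : Distinct5 a b c d e) :
    ((edgeList a b c d e).map fun p => s(p.1, p.2)).Nodup := by
  obtain ⟨h1, h2, h3, h4, h5, h6, h7, h8, h9, h10⟩ := hd
  simp [edgeList, *, Ne.symm]

lemma isAttained_phi {p : Vtx m × Vtx m} (hp : p ∈ edgeList a b c d e) :
    IsAttained a b c d e (phi p.1 p.2) := by
  classical
  rw [IsAttained, colorCount, ← Nat.pos_iff_ne_zero, List.countP_pos_iff]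
  exact ⟨_, List.mem_map_of_mem hp, by simp⟩

lemma exists_max_firstDiffBlock (a b c d e : Vtx m) :
    ∃ p ∈ edgeList a b c d e, ∀ q ∈ edgeList a b c d e,
      firstDiffBlock q.1 q.2 ≤ firstDiffBlock p.1 p.2 := by
  classical
  obtain ⟨p, hp, hmax⟩ := (edgeList a b c d e).toFinset.exists_max_image
    (fun q => firstDiffBlock q.1 q.2) ⟨(a, b), by simp [edgeList]⟩
  exact ⟨p, List.mem_toFinset.mp hp, fun q hq => hmax q (List.mem_toFinset.mpr hq)⟩

end

theorem no_five_paths_general (m : ℕ) :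
    ¬ ∃ a b c d e : Vtx m, IsConfig22222 a b c d e ∧
      ∀ col : Color m, IsAttained a b c d e col → IsPathClass a b c d e col := by
  rintro ⟨a, b, c, d, e, ⟨hd, -⟩, hpaths⟩
  obtain ⟨p, hp, hmax⟩ := exists_max_firstDiffBlock a b c d e
  obtain ⟨P, hP, Q, hQ, hPQ, hPp, hQp, hshare⟩ := hpaths _ (isAttained_phi hp)
  obtain ⟨v, hvP, hvQ⟩ : ∃ v, v ∈ s(P.1, P.2) ∧ v ∈ s(Q.1, Q.2) := by
    rcases hshare with h | h | h | h <;> simp [h]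
  obtain ⟨z, u, w, hzu, huw, hPzu, hQzw⟩ := Sym2.exists_eq_mk_mk_of_mem_of_mem
    (Sym2.mk_isDiag_iff.not.mpr (fst_ne_snd_of_mem_edgeList hd hP))
    (fun h => hPQ (List.inj_on_of_nodup_map (nodup_map_mk_edgeList hd) hP hQ h)) hvP hvQ
  have hzu_p : blockPart z u = blockPart p.1 p.2 := by
    rw [← blockPart_eq_of_mk_eq hPzu, ← phi_fst, ← phi_fst, hPp]
  have hzw_p : blockPart z w = blockPart p.1 p.2 := by
    rw [← blockPart_eq_of_mk_eq hQzw, ← phi_fst, ← phi_fst, hQp]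
  have hlt := firstDiffBlock_lt_of_blockPart_eq hzu huw (hzu_p.trans hzw_p.symm)
  obtain ⟨r, hr, hruw⟩ := exists_mem_edgeList_mk_eq
    (mem_of_mem_edgeList hP (hPzu ▸ Sym2.mem_mk_right z u))
    (mem_of_mem_edgeList hQ (hQzw ▸ Sym2.mem_mk_right z w)) huw
  have hle := firstDiffBlock_eq_of_mk_eq hruw ▸ hmax r hr
  have hzu_eq : firstDiffBlock z u = firstDiffBlock p.1 p.2 := congrArg Prod.fst hzu_p
  omega

/-- There is no 2-2-2-2-2 configuration under `φ` in which all five color classes are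
paths of length 2. -/
theorem no_five_paths (m : ℕ) (hm : 0 < m) :
    ¬ ∃ a b c d e : Vtx m, IsConfig22222 a b c d e ∧
      ∀ col : Color m, IsAttained a b c d e col → IsPathClass a b c d e col :=
  no_five_paths_general m

end CFLS
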